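/- For all h ≥ 2, the minimum number of pebbles required in a whole black-white pebbling (without white sliding moves) of the complete binary tree of height h is exactly ⌈h/2⌉ + 1. -/

import Mathlib

/-! ## Fractional black-white pebbling -/

/-- A fractional pebble configuration: black and white pebble values on each node. -/
structure FConfig (V : Type) where
  b : V → ℝ
  w : V → ℝ

namespace FConfig

/-- Validity: all values nonnegative, total value of each node at most 1. -/
def Valid {V : Type} (C : FConfig V) : Prop :=
  ∀ v, 0 ≤ C.b v ∧ 0 ≤ C.w v ∧ C.b v + C.w v ≤ 1

/-- Total pebble weight of a configuration. -/
noncomputable def weight {V : Type} [Fintype V] (C : FConfig V) : ℝ :=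
  ∑ v, (C.b v + C.w v)

/-- The empty configuration. -/
def zero (V : Type) : FConfig V := ⟨fun _ => 0, fun _ => 0⟩

/-- A whole (non-fractional) configuration: all values 0 or 1. -/
def Whole {V : Type} (C : FConfig V) : Prop :=
  ∀ v, (C.b v = 0 ∨ C.b v = 1) ∧ (C.w v = 0 ∨ C.w v = 1)

/-- A black configuration: whole, and with no white pebbles. -/
def BlackOnly {V : Type} (C : FConfig V) : Prop :=
  C.Whole ∧ ∀ v, C.w v = 0

end FConfig

/-- One legal move of the fractional black-white pebble game (no white sliding):
(i) decrease a black value; (ii) increase a white value; (iii) if every child of `v`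
has total pebble value 1, decrease `w v` to 0 and/or increase `b v` arbitrarily while
simultaneously decreasing the black values of the children of `v` arbitrarily.
Here `child c v` means `c` is a child of `v`. -/
def FMove {V : Type} (child : V → V → Prop) (C C' : FConfig V) : Prop :=
  (∃ v, C'.b v ≤ C.b v ∧ C'.w v = C.w v ∧
     ∀ u, u ≠ v → C'.b u = C.b u ∧ C'.w u = C.w u) ∨
  (∃ v, C'.b v = C.b v ∧ C.w v ≤ C'.w v ∧
     ∀ u, u ≠ v → C'.b u = C.b u ∧ C'.w u = C.w u) ∨
  (∃ v, (∀ c, child c v → C.b c + C.w c = 1) ∧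
     C.b v ≤ C'.b v ∧ (C'.w v = 0 ∨ C'.w v = C.w v) ∧
     (∀ c, child c v → C'.b c ≤ C.b c ∧ C'.w c = C.w c) ∧
     (∀ u, u ≠ v → ¬ child u v → C'.b u = C.b u ∧ C'.w u = C.w u))

/-- The additional white sliding move: if `w v = 1`, `j` is a child of `v`, and every
child of `v` other than `j` has total pebble value 1, then set `w v = 0` and increase
`w j` so that `j` gets total pebble value 1. -/
def WhiteSlide {V : Type} (child : V → V → Prop) (C C' : FConfig V) : Prop :=
  ∃ v j, child j v ∧ j ≠ v ∧ C.w v = 1 ∧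
    (∀ c, child c v → c ≠ j → C.b c + C.w c = 1) ∧
    C'.w v = 0 ∧ C'.b v = C.b v ∧
    C'.b j = C.b j ∧ C.w j ≤ C'.w j ∧ C'.b j + C'.w j = 1 ∧
    (∀ u, u ≠ v → u ≠ j → C'.b u = C.b u ∧ C'.w u = C.w u)

/-- A pebbling of cost at most `p`, with moves given by `move`, all configurations
satisfying the extra constraint `Extra`, starting and ending with the empty
configuration and achieving `Goal` (a property of the whole sequence together with
its length). -/
def PebblingLE {V : Type} [Fintype V] (move : FConfig V → FConfig V → Prop)
    (Extra : FConfig V → Prop) (Goal : (ℕ → FConfig V) → ℕ → Prop) (p : ℝ) : Prop :=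
  ∃ (n : ℕ) (C : ℕ → FConfig V),
    C 0 = FConfig.zero V ∧ C n = FConfig.zero V ∧
    (∀ t ≤ n, (C t).Valid) ∧
    (∀ t ≤ n, Extra (C t)) ∧
    (∀ t < n, move (C t) (C (t + 1))) ∧
    Goal C n ∧
    (∀ t ≤ n, (C t).weight ≤ p)

/-! ## The complete `d`-ary tree of height `h` (with `h` levels) -/

/-- Nodes of the complete `d`-ary tree with `h` levels: a level `l < h`
together with an index among the `d ^ l` nodes of that level. -/
abbrev TNode (d h : ℕ) := Σ l : Fin h, Fin (d ^ (l : ℕ))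

/-- `c` is a child of `v` in the complete `d`-ary tree. -/
def IsChild (d h : ℕ) (c v : TNode d h) : Prop :=
  (c.1 : ℕ) = (v.1 : ℕ) + 1 ∧ ∃ j : Fin d, (c.2 : ℕ) = d * (v.2 : ℕ) + (j : ℕ)

/-- The root of the tree. -/
def troot (d h : ℕ) (hh : 0 < h) : TNode d h :=
  ⟨⟨0, hh⟩, ⟨0, by simp⟩⟩

/-- The tree `T_d^h` has a black pebbling of cost at most `p`. -/
def BlackPebbles (d h : ℕ) (hh : 0 < h) (p : ℝ) : Prop :=
  PebblingLE (FMove (IsChild d h)) FConfig.BlackOnly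
    (fun C n => ∃ t ≤ n, (C t).b (troot d h hh) = 1) p

/-- The tree `T_d^h` has a whole black-white pebbling (no white sliding)
of cost at most `p`. -/
def BWPebbles (d h : ℕ) (hh : 0 < h) (p : ℝ) : Prop :=
  PebblingLE (FMove (IsChild d h)) FConfig.Whole
    (fun C n => ∃ t ≤ n, (C t).b (troot d h hh) = 1) p

/-- The tree `T_d^h` has a fractional pebbling of cost at most `p`. -/
def FRPebbles (d h : ℕ) (hh : 0 < h) (p : ℝ) : Prop :=
  PebblingLE (FMove (IsChild d h)) (fun _ => True)
    (fun C n => ∃ t ≤ n, (C t).b (troot d h hh) = 1) p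

/-- Fractional pebbling of `T_d^h` where white sliding moves are also permitted. -/
def FRPebblesWS (d h : ℕ) (hh : 0 < h) (p : ℝ) : Prop :=
  PebblingLE (fun C C' => FMove (IsChild d h) C C' ∨ WhiteSlide (IsChild d h) C C')
    (fun _ => True)
    (fun C n => ∃ t ≤ n, (C t).b (troot d h hh) = 1) p


/-!
Upper bound: pebble one child of the root black and the other white, slide the black pebble to
the root, lift it, and discharge the white pebble. On a subtree of height `m`, placing a black
pebble on the root or discharging a white one there needs at most `m / 2 + 2` pebbles: one
child is handled recursively with nothing else held, the other through its own two children,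
one pebbled black and one white, so that an extra pebble is held only while working two levels
down.

Lower bound: if the children of a node `v` of height `m` are pebbled at time `τ`, with no black
pebble below `v` at time `s ≤ τ` and no white one at time `t ≥ τ`, then some time of `[s, t]`
has `⌈m / 2⌉ + 1` pebbles below `v`. By induction on `m`: the pebble of a child `x` at time `τ`
was placed or is removed at a time when the children of `x` are pebbled, so the induction
hypothesis applies below `x` in a window around that time. For even `m` this suffices. For odd
`m`, were the bound to fail, the heavy time of each child would find the other child's subtree
empty; then one child is heavy after `τ` and after the other's window, and the grandchildren
below the other child yield two disjoint subtrees that are heavy at the same time.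
-/

open Function Finset

inductive Pebble
  | none
  | black
  | white
  deriving DecidableEq

namespace Pebble

variable {V : Type}

def toFConfig (σ : V → Pebble) : FConfig V :=
  ⟨fun v => if σ v = black then 1 else 0, fun v => if σ v = white then 1 else 0⟩

@[simp] lemma toFConfig_b (σ : V → Pebble) (v : V) :
    (toFConfig σ).b v = if σ v = black then 1 else 0 := rfl

@[simp] lemma toFConfig_w (σ : V → Pebble) (v : V) :
    (toFConfig σ).w v = if σ v = white then 1 else 0 := rfl

lemma toFConfig_valid (σ : V → Pebble) : (toFConfig σ).Valid := by
  intro v; cases hv : σ v <;> simp [hv]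

lemma toFConfig_whole (σ : V → Pebble) : (toFConfig σ).Whole := by
  intro v; cases hv : σ v <;> simp [hv]

lemma toFConfig_none : toFConfig (fun _ : V => none) = FConfig.zero V := rfl

def count [Fintype V] (σ : V → Pebble) : ℕ := #{v | σ v ≠ none}

lemma weight_toFConfig [Fintype V] (σ : V → Pebble) : (toFConfig σ).weight = count σ := by
  rw [FConfig.weight, count, natCast_card_filter]
  exact sum_congr rfl fun v _ => by cases hv : σ v <;> simp [hv]

lemma full_iff (σ : V → Pebble) (v : V) :
    (toFConfig σ).b v + (toFConfig σ).w v = 1 ↔ σ v ≠ none := by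
  cases hv : σ v <;> simp [hv]

def Vacant (σ : V → Pebble) (S : Finset V) : Prop := ∀ w ∈ S, σ w = none

lemma Vacant.mono {σ : V → Pebble} {S T : Finset V} (hS : Vacant σ S) (hTS : T ⊆ S) :
    Vacant σ T := fun w hw => hS w (hTS hw)

variable [DecidableEq V]

lemma count_update_le [Fintype V] (σ : V → Pebble) (v : V) (s : Pebble) :
    count (update σ v s) ≤ count σ + 1 := by
  refine (card_le_card fun w hw => ?_).trans (card_insert_le v _)
  by_cases hwv : w = v <;> simp_all

lemma count_update_none_le [Fintype V] (σ : V → Pebble) (v : V) :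
    count (update σ v none) ≤ count σ :=
  card_le_card fun w hw => by by_cases hwv : w = v <;> simp_all

lemma count_update_none_add_one [Fintype V] {σ : V → Pebble} {v : V} (hv : σ v ≠ none) :
    count (update σ v none) + 1 = count σ := by
  have : ({w | update σ v none w ≠ none} : Finset V) = ({w | σ w ≠ none} : Finset V).erase v := by
    ext w; by_cases hwv : w = v <;> simp_all
  rw [count, count, this, card_erase_add_one (by simpa using hv)]

lemma Vacant.update {σ : V → Pebble} {S : Finset V} (hS : Vacant σ S) {a : V} (ha : a ∉ S)
    (s : Pebble) : Vacant (update σ a s) S := fun w hw => by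
  rw [update_of_ne (ne_of_mem_of_not_mem hw ha)]; exact hS w hw

variable (child : V → V → Prop)

inductive Step : (V → Pebble) → (V → Pebble) → Prop
  | place {σ v} : (∀ c, child c v → σ c ≠ none) → Step σ (update σ v black)
  | slide {σ v c} : (∀ d, child d v → σ d ≠ none) → child c v → σ c = black →
      Step σ (update (update σ v black) c none)
  | addWhite {σ v} : σ v = none → Step σ (update σ v white)
  | removeBlack {σ v} : σ v = black → Step σ (update σ v none)
  | removeWhite {σ v} : σ v = white → (∀ c, child c v → σ c ≠ none) →
      Step σ (update σ v none)

variable {child}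

lemma Step.fMove (hirr : ∀ c v, child c v → c ≠ v) {σ τ : V → Pebble} :
    Step child σ τ → FMove child (toFConfig σ) (toFConfig τ) := by
  intro hs
  cases hs with
  | @place v hfull =>
    refine Or.inr (Or.inr ⟨v, fun c hc => (full_iff σ c).2 (hfull c hc), ?_, ?_, ?_, ?_⟩)
    · simp [ite_le_one]
    · simp
    · intro c hc; simp [update_of_ne (hirr c _ hc)]
    · intro u hu _; simp [update_of_ne hu]
  | @slide v c hfull hc hcb =>
    have hcv := hirr c _ hc
    refine Or.inr (Or.inr ⟨v, fun d hd => (full_iff σ d).2 (hfull d hd), ?_, ?_, ?_, ?_⟩)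
    · simp [update_of_ne hcv.symm, ite_le_one]
    · simp [update_of_ne hcv.symm]
    · intro d hd
      by_cases hdc : d = c
      · subst hdc; simp [hcb]
      · simp [update_of_ne hdc, update_of_ne (hirr d _ hd)]
    · intro u hu hnu
      have huc : u ≠ c := fun h => hnu (h ▸ hc)
      simp [update_of_ne hu, update_of_ne huc]
  | @addWhite v hv =>
    refine Or.inr (Or.inl ⟨v, by simp [hv], by simp [hv], fun u hu => ?_⟩)
    simp [update_of_ne hu]
  | @removeBlack v hv =>
    refine Or.inl ⟨v, by simp [hv], by simp [hv], fun u hu => ?_⟩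
    simp [update_of_ne hu]
  | @removeWhite v hv hfull =>
    refine Or.inr (Or.inr ⟨v, fun c hc => (full_iff σ c).2 (hfull c hc), ?_, ?_, ?_, ?_⟩)
    · simp [hv]
    · simp
    · intro c hc; simp [update_of_ne (hirr c _ hc)]
    · intro u hu _; simp [update_of_ne hu]

variable [Fintype V] (child) in
inductive Reach (p : ℕ) : (V → Pebble) → (V → Pebble) → Prop
  | refl {σ} : count σ ≤ p → Reach p σ σ
  | tail {σ τ τ'} : Reach p σ τ → Step child τ τ' → count τ' ≤ p → Reach p σ τ'

namespace Reach

variable [Fintype V] {p : ℕ} {σ τ τ' : V → Pebble}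

lemma count_le (hr : Reach child p σ τ) : count τ ≤ p := by
  cases hr <;> assumption

lemma trans (h₁ : Reach child p σ τ) (h₂ : Reach child p τ τ') : Reach child p σ τ' := by
  induction h₂ with
  | refl _ => exact h₁
  | tail _ hs hc ih => exact ih.tail hs hc

lemma place (hr : Reach child p σ τ) {v : V} (hfull : ∀ c, child c v → τ c ≠ none)
    (hp : count τ + 1 ≤ p) : Reach child p σ (update τ v black) :=
  hr.tail (.place hfull) ((count_update_le τ v _).trans hp)

lemma addWhite (hr : Reach child p σ τ) {v : V} (hv : τ v = none) (hp : count τ + 1 ≤ p) :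
    Reach child p σ (update τ v white) :=
  hr.tail (.addWhite hv) ((count_update_le τ v _).trans hp)

lemma slide (hirr : ∀ c v, child c v → c ≠ v) (hr : Reach child p σ τ) {v c : V}
    (hfull : ∀ d, child d v → τ d ≠ none) (hc : child c v) (hcb : τ c = black) :
    Reach child p σ (update (update τ v black) c none) := by
  refine hr.tail (.slide hfull hc hcb) ?_
  have hcb' : update τ v black c ≠ none := by simp [update_of_ne (hirr c v hc), hcb]
  have := count_update_none_add_one hcb'
  have := count_update_le τ v black
  have := hr.count_le
  omega

lemma removeBlack (hr : Reach child p σ τ) {v : V} (hv : τ v = black) :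
    Reach child p σ (update τ v none) :=
  hr.tail (.removeBlack hv) ((count_update_none_le τ v).trans hr.count_le)

lemma removeWhite (hr : Reach child p σ τ) {v : V} (hv : τ v = white)
    (hfull : ∀ c, child c v → τ c ≠ none) : Reach child p σ (update τ v none) :=
  hr.tail (.removeWhite hv hfull) ((count_update_none_le τ v).trans hr.count_le)

lemma exists_extension (hr : Reach child p σ τ) (f : ℕ → V → Pebble) (n : ℕ) (hfn : f n = σ) :
    ∃ g : ℕ → V → Pebble, ∃ m, n ≤ m ∧ g m = τ ∧ (∀ i ≤ n, g i = f i) ∧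
      ∀ i, n ≤ i → i < m → Step child (g i) (g (i + 1)) ∧ count (g (i + 1)) ≤ p := by
  induction hr with
  | refl _ => exact ⟨f, n, le_rfl, hfn, fun _ _ => rfl, fun i hi hi' => by omega⟩
  | @tail τ τ' hr hs hc ih =>
    obtain ⟨g, m, hnm, hgm, hgf, hg⟩ := ih
    refine ⟨fun i => if i ≤ m then g i else τ', m + 1, by omega, by simp, fun i hi => ?_,
      fun i hi hi' => ?_⟩
    · simp [show i ≤ m by omega, hgf i hi]
    · rcases Nat.lt_or_ge i m with him | him
      · simpa [show i ≤ m by omega, show i + 1 ≤ m by omega] using hg i hi him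
      · obtain rfl : i = m := by omega
        simpa [hgm] using ⟨hs, hc⟩

end Reach

lemma pebblingLE_of_reach [Fintype V] (hirr : ∀ c v, child c v → c ≠ v) {p : ℕ}
    {σ : V → Pebble} {v : V} (hv : σ v = black) (h₁ : Reach child p (fun _ => none) σ)
    (h₂ : Reach child p σ (fun _ => none)) :
    PebblingLE (FMove child) FConfig.Whole (fun C n => ∃ t ≤ n, (C t).b v = 1) p := by
  obtain ⟨g₁, m₁, -, hg₁m, hg₁0, hg₁⟩ := h₁.exists_extension (fun _ _ => none) 0 rfl
  obtain ⟨g, m, hm, hgm, hgg₁, hg₂⟩ := h₂.exists_extension g₁ m₁ hg₁m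
  have hg0 : g 0 = fun _ => none := (hgg₁ 0 (Nat.zero_le _)).trans (hg₁0 0 le_rfl)
  have hstep : ∀ t < m, Step child (g t) (g (t + 1)) ∧ count (g (t + 1)) ≤ p := by
    intro t ht
    rcases Nat.lt_or_ge t m₁ with htm | htm
    · rw [hgg₁ t htm.le, hgg₁ (t + 1) htm]
      exact hg₁ t (Nat.zero_le t) htm
    · exact hg₂ t htm ht
  refine ⟨m, fun t => toFConfig (g t), by simp [hg0, toFConfig_none], by simp [hgm, toFConfig_none],
    fun t _ => toFConfig_valid _, fun t _ => toFConfig_whole _,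
    fun t ht => (hstep t ht).1.fMove hirr, ⟨m₁, hm, by simp [hgg₁ m₁ le_rfl, hg₁m, hv]⟩, ?_⟩
  rintro (_ | t) ht
  · simp [weight_toFConfig, hg0, count]
  · rw [weight_toFConfig]
    exact_mod_cast (hstep t ht).2

end Pebble

namespace TNode

variable {d h : ℕ}

lemma ext' {x y : TNode d h} (hl : (x.1 : ℕ) = y.1) (hi : (x.2 : ℕ) = y.2) : x = y := by
  obtain ⟨⟨l, hl'⟩, ⟨i, hi'⟩⟩ := x
  obtain ⟨⟨l', hl''⟩, ⟨i', hi''⟩⟩ := y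
  simp only at hl hi
  subst hl hi
  rfl

lemma _root_.IsChild.level_eq {c v : TNode d h} (hc : IsChild d h c v) : (c.1 : ℕ) = v.1 + 1 := hc.1

lemma _root_.IsChild.index_div {c v : TNode d h} (hc : IsChild d h c v) : (c.2 : ℕ) / d = v.2 := by
  obtain ⟨j, hj⟩ := hc.2
  rw [hj, Nat.mul_add_div (by have := j.pos; omega), Nat.div_eq_of_lt j.isLt, add_zero]

lemma _root_.IsChild.ne {c v : TNode d h} (hc : IsChild d h c v) : c ≠ v := by
  rintro rfl; have := hc.level_eq; omega

lemma not_isChild_of_leaf {c v : TNode d h} (hv : h ≤ (v.1 : ℕ) + 1) : ¬ IsChild d h c v := by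
  intro hc; have := hc.level_eq; have := c.1.isLt; omega

def subtree (v : TNode d h) : Finset (TNode d h) :=
  {u | (v.1 : ℕ) ≤ u.1 ∧ (u.2 : ℕ) / d ^ ((u.1 : ℕ) - v.1) = v.2}

lemma mem_subtree {u v : TNode d h} :
    u ∈ subtree v ↔ (v.1 : ℕ) ≤ u.1 ∧ (u.2 : ℕ) / d ^ ((u.1 : ℕ) - v.1) = v.2 := by
  simp [subtree]

lemma mem_subtree_self (v : TNode d h) : v ∈ subtree v := by
  simp [mem_subtree]

lemma level_le_of_mem_subtree {u v : TNode d h} (hu : u ∈ subtree v) : (v.1 : ℕ) ≤ u.1 :=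
  (mem_subtree.1 hu).1

lemma not_mem_subtree_of_level_lt {x v : TNode d h} (hl : (x.1 : ℕ) < v.1) : x ∉ subtree v :=
  fun hx => absurd (level_le_of_mem_subtree hx) (by omega)

lemma eq_of_mem_subtree_of_level_eq {u x y : TNode d h} (hx : u ∈ subtree x) (hy : u ∈ subtree y)
    (hl : (x.1 : ℕ) = y.1) : x = y := by
  rw [mem_subtree] at hx hy
  exact ext' hl (by rw [← hx.2, ← hy.2, hl])

lemma subtree_subset {u v : TNode d h} (hu : u ∈ subtree v) : subtree u ⊆ subtree v := by
  intro w hw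
  rw [mem_subtree] at hu hw ⊢
  refine ⟨hu.1.trans hw.1, ?_⟩
  rw [show (w.1 : ℕ) - v.1 = (w.1 - u.1) + (u.1 - v.1) by omega, pow_add, ← Nat.div_div_eq_div_mul,
    hw.2, hu.2]

lemma _root_.IsChild.mem_subtree {c v : TNode d h} (hc : IsChild d h c v) : c ∈ subtree v := by
  have hl : (c.1 : ℕ) - v.1 = 1 := by rw [hc.level_eq]; omega
  rw [TNode.mem_subtree, hl, pow_one]
  exact ⟨by rw [hc.level_eq]; omega, hc.index_div⟩

def below (v : TNode d h) : Finset (TNode d h) := (subtree v).erase v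

lemma _root_.IsChild.subtree_subset_below {c v : TNode d h} (hc : IsChild d h c v) :
    subtree c ⊆ below v := fun u hu =>
  mem_erase.2 ⟨fun huv => by
    have := level_le_of_mem_subtree hu; have := hc.level_eq; subst huv; omega,
    subtree_subset hc.mem_subtree hu⟩

lemma below_subset_subtree (v : TNode d h) : below v ⊆ subtree v := erase_subset _ _

lemma _root_.IsChild.mem_below {c v : TNode d h} (hc : IsChild d h c v) : c ∈ below v :=
  hc.subtree_subset_below (mem_subtree_self c)

lemma _root_.IsChild.below_subset_below {c v : TNode d h} (hc : IsChild d h c v) :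
    below c ⊆ below v :=
  (below_subset_subtree c).trans hc.subtree_subset_below

def childAt (v : TNode d h) (j : Fin d) (hv : (v.1 : ℕ) + 1 < h) : TNode d h :=
  ⟨⟨v.1 + 1, hv⟩, ⟨d * v.2 + j, by
    have hv2 := v.2.isLt; have := j.isLt
    calc d * v.2 + j < d * (v.2 + 1) := by rw [mul_add, mul_one]; omega
      _ ≤ d * d ^ (v.1 : ℕ) := Nat.mul_le_mul_left _ hv2
      _ = d ^ ((v.1 : ℕ) + 1) := (pow_succ' _ _).symm⟩⟩

lemma isChild_childAt (v : TNode d h) (j : Fin d) (hv : (v.1 : ℕ) + 1 < h) :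
    IsChild d h (childAt v j hv) v := ⟨rfl, j, rfl⟩

lemma _root_.IsChild.eq_childAt {c v : TNode d h} (hc : IsChild d h c v) (hv : (v.1 : ℕ) + 1 < h) :
    ∃ j, c = childAt v j hv := by
  obtain ⟨j, hj⟩ := hc.2
  exact ⟨j, ext' hc.1 hj⟩

lemma childAt_zero_ne_one (v : TNode 2 h) (hv : (v.1 : ℕ) + 1 < h) :
    childAt v 0 hv ≠ childAt v 1 hv := by
  intro h01
  have := congrArg (fun x : TNode 2 h => (x.2 : ℕ)) h01
  simp [childAt] at this

structure Children (v c₀ c₁ : TNode 2 h) : Prop where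
  isChild₀ : IsChild 2 h c₀ v
  isChild₁ : IsChild 2 h c₁ v
  ne : c₀ ≠ c₁
  eq_or_eq : ∀ c, IsChild 2 h c v → c = c₀ ∨ c = c₁

lemma Children.symm {v c₀ c₁ : TNode 2 h} (hv : Children v c₀ c₁) : Children v c₁ c₀ :=
  ⟨hv.isChild₁, hv.isChild₀, hv.ne.symm, fun c hc => (hv.eq_or_eq c hc).symm⟩

lemma Children.not_mem_subtree_of_mem_subtree {v c₀ c₁ u : TNode 2 h}
    (hv : Children v c₀ c₁) (hu : u ∈ subtree c₀) : u ∉ subtree c₁ := fun hu' =>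
  hv.ne (eq_of_mem_subtree_of_level_eq hu hu' (by
    rw [hv.isChild₀.level_eq, hv.isChild₁.level_eq]))

lemma children_childAt (v : TNode 2 h) (hv : (v.1 : ℕ) + 1 < h) :
    Children v (childAt v 0 hv) (childAt v 1 hv) where
  isChild₀ := isChild_childAt v 0 hv
  isChild₁ := isChild_childAt v 1 hv
  ne := childAt_zero_ne_one v hv
  eq_or_eq c hc := by
    obtain ⟨j, rfl⟩ := hc.eq_childAt hv
    fin_cases j <;> simp

end TNode

open Pebble (Reach Vacant count count_update_le)
open TNode

section UpperBound

variable {h : ℕ}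

lemma isChild_irrefl : ∀ c v : TNode 2 h, IsChild 2 h c v → c ≠ v := fun _ _ hc => hc.ne

def BlackPlaceable (u : TNode 2 h) (k : ℕ) : Prop :=
  ∀ σ, Vacant σ (subtree u) → ∀ p, count σ + k ≤ p →
    Reach (IsChild 2 h) p σ (update σ u .black)

def WhiteRemovable (u : TNode 2 h) (k : ℕ) : Prop :=
  ∀ σ, Vacant σ (subtree u) → ∀ p, count σ + k ≤ p →
    Reach (IsChild 2 h) p (update σ u .white) σ

lemma BlackPlaceable.mono {u : TNode 2 h} {k l : ℕ} (hu : BlackPlaceable u k) (hkl : k ≤ l) :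
    BlackPlaceable u l := fun σ hσ p hp => hu σ hσ p (by omega)

lemma WhiteRemovable.mono {u : TNode 2 h} {k l : ℕ} (hu : WhiteRemovable u k) (hkl : k ≤ l) :
    WhiteRemovable u l := fun σ hσ p hp => hu σ hσ p (by omega)

lemma blackPlaceable_leaf {u : TNode 2 h} (hu : h ≤ (u.1 : ℕ) + 1) : BlackPlaceable u 1 :=
  fun σ _ p hp => (Reach.refl (by omega)).place (fun _ hc => absurd hc (not_isChild_of_leaf hu))
    (by omega)

lemma whiteRemovable_leaf {u : TNode 2 h} (hu : h ≤ (u.1 : ℕ) + 1) : WhiteRemovable u 1 := by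
  intro σ hσ p hp
  have hr := (Reach.refl (child := IsChild 2 h) ((count_update_le σ u .white).trans hp)).removeWhite
    (update_self u .white σ) (fun _ hc => absurd hc (not_isChild_of_leaf hu))
  rwa [update_idem, show update σ u .none = σ from
    update_eq_self_iff.2 (hσ u (mem_subtree_self u)).symm] at hr

lemma blackPlaceable_of_children {u c₀ c₁ : TNode 2 h} (hu : Children u c₀ c₁) {k : ℕ}
    (h₀ : BlackPlaceable c₀ k) (h₁ : BlackPlaceable c₁ k) : BlackPlaceable u (k + 1) := by
  intro σ hσ p hp
  have hσu : σ u = .none := hσ u (mem_subtree_self u)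
  have hσ₀ : σ c₀ = .none := hσ c₀ hu.isChild₀.mem_subtree
  have hσ₁ : σ c₁ = .none := hσ c₁ hu.isChild₁.mem_subtree
  have h₀u := hu.isChild₀.ne
  have h₁u := hu.isChild₁.ne
  have hne := hu.ne
  have r := (h₀ σ (hσ.mono (subtree_subset hu.isChild₀.mem_subtree)) p (by omega)).trans
    (h₁ _ ((hσ.mono (subtree_subset hu.isChild₁.mem_subtree)).update (hu.not_mem_subtree_of_mem_subtree (mem_subtree_self c₀)) _) p
      (by have := count_update_le σ c₀ .black; omega))
  have r := r.slide isChild_irrefl (v := u) (c := c₀)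
    (fun d hd => by rcases hu.eq_or_eq d hd with rfl | rfl <;> grind [update_apply])
    hu.isChild₀ (by grind [update_apply])
  have r := r.removeBlack (v := c₁) (by grind [update_apply])
  convert r using 1
  ext w; grind [update_apply]

lemma blackPlaceable_of_grandchildren {u c₀ c₁ b₀ b₁ : TNode 2 h} (hu : Children u c₀ c₁)
    (hc : Children c₁ b₀ b₁) {k : ℕ} (hk : 2 ≤ k) (h₀ : BlackPlaceable c₀ (k + 1))
    (hb₀ : BlackPlaceable b₀ k) (hb₁ : WhiteRemovable b₁ k) : BlackPlaceable u (k + 1) := by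
  intro σ hσ p hp
  have l₀ := hu.isChild₀.level_eq
  have l₁ := hu.isChild₁.level_eq
  have m₀ := hc.isChild₀.level_eq
  have m₁ := hc.isChild₁.level_eq
  have hsub₁ := subtree_subset hu.isChild₁.mem_subtree
  have hsb₀ := subtree_subset hc.isChild₀.mem_subtree
  have hsb₁ := subtree_subset hc.isChild₁.mem_subtree
  have hσu : σ u = .none := hσ u (mem_subtree_self u)
  have hσ₀ : σ c₀ = .none := hσ c₀ hu.isChild₀.mem_subtree
  have hσ₁ : σ c₁ = .none := hσ c₁ hu.isChild₁.mem_subtree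
  have hσb₀ : σ b₀ = .none := hσ b₀ (hsub₁ hc.isChild₀.mem_subtree)
  have hσb₁ : σ b₁ = .none := hσ b₁ (hsub₁ hc.isChild₁.mem_subtree)
  have n₀₁ := hu.ne
  have nb := hc.ne
  have r := (h₀ σ (hσ.mono (subtree_subset hu.isChild₀.mem_subtree)) p hp).trans
    (hb₀ _ ((hσ.mono (hsb₀.trans hsub₁)).update (not_mem_subtree_of_level_lt (by omega)) _) p
      (by have := count_update_le σ c₀ .black; omega))
  have r := r.addWhite (v := b₁) (by grind [update_apply])
    (by have := count_update_le σ c₀ .black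
        have := count_update_le (update σ c₀ .black) b₀ .black; omega)
  have r := r.slide isChild_irrefl (v := c₁) (c := b₀)
    (fun d hd => by rcases hc.eq_or_eq d hd with rfl | rfl <;> grind [update_apply])
    hc.isChild₀ (by grind [update_apply])
  have r := r.slide isChild_irrefl (v := u) (c := c₀)
    (fun d hd => by rcases hu.eq_or_eq d hd with rfl | rfl <;> grind [update_apply])
    hu.isChild₀ (by grind [update_apply])
  have r := r.removeBlack (v := c₁) (by grind [update_apply])
  have hend : Reach (IsChild 2 h) p (update (update σ u .black) b₁ .white) (update σ u .black) :=
    hb₁ _ ((hσ.mono (hsb₁.trans hsub₁)).update (not_mem_subtree_of_level_lt (by omega)) _) p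
      (by have := count_update_le σ u .black; omega)
  refine Reach.trans ?_ hend
  convert r using 1
  ext w; grind [update_apply]

lemma whiteRemovable_of_children {u c₀ c₁ : TNode 2 h} (hu : Children u c₀ c₁) {k : ℕ}
    (hk : 2 ≤ k) (h₀ : BlackPlaceable c₀ k) (h₁ : WhiteRemovable c₁ (k + 1)) :
    WhiteRemovable u (k + 1) := by
  intro σ hσ p hp
  have hσu : σ u = .none := hσ u (mem_subtree_self u)
  have l₀ := hu.isChild₀.level_eq
  have l₁ := hu.isChild₁.level_eq
  have hne := hu.ne
  have hσ₀ : σ c₀ = .none := hσ c₀ hu.isChild₀.mem_subtree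
  have hσ₁ : σ c₁ = .none := hσ c₁ hu.isChild₁.mem_subtree
  have hu₀ := count_update_le σ u .white
  have r := h₀ _ ((hσ.mono (subtree_subset hu.isChild₀.mem_subtree)).update
    (not_mem_subtree_of_level_lt (x := u) (by omega)) .white) p (by omega)
  have r := r.addWhite (v := c₁) (by grind [update_apply])
    (by have := count_update_le (update σ u .white) c₀ .black; omega)
  have r := r.removeWhite (v := u) (by grind [update_apply])
    (fun d hd => by rcases hu.eq_or_eq d hd with rfl | rfl <;> grind [update_apply])
  have r := r.removeBlack (v := c₀) (by grind [update_apply])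
  refine Reach.trans ?_ (h₁ σ (hσ.mono (subtree_subset hu.isChild₁.mem_subtree)) p hp)
  convert r using 1
  ext w; grind [update_apply]

lemma whiteRemovable_of_grandchildren {u c₀ c₁ b₀ b₁ : TNode 2 h} (hu : Children u c₀ c₁)
    (hc : Children c₀ b₀ b₁) {k : ℕ} (hk : 3 ≤ k) (hb₀ : BlackPlaceable b₀ k)
    (hb₁ : WhiteRemovable b₁ k) (h₁ : WhiteRemovable c₁ (k + 1)) : WhiteRemovable u (k + 1) := by
  intro σ hσ p hp
  have hσu : σ u = .none := hσ u (mem_subtree_self u)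
  have l₀ := hu.isChild₀.level_eq
  have l₁ := hu.isChild₁.level_eq
  have m₀ := hc.isChild₀.level_eq
  have m₁ := hc.isChild₁.level_eq
  have hne := hu.ne
  have hne' := hc.ne
  have hsub₀ := subtree_subset hu.isChild₀.mem_subtree
  have hσ₀ : σ c₀ = .none := hσ c₀ hu.isChild₀.mem_subtree
  have hσ₁ : σ c₁ = .none := hσ c₁ hu.isChild₁.mem_subtree
  have hσb₀ : σ b₀ = .none := hσ b₀ (hsub₀ hc.isChild₀.mem_subtree)
  have hσb₁ : σ b₁ = .none := hσ b₁ (hsub₀ hc.isChild₁.mem_subtree)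
  have hu₀ := count_update_le σ u .white
  have r := hb₀ _ ((hσ.mono ((subtree_subset hc.isChild₀.mem_subtree).trans hsub₀)).update
    (not_mem_subtree_of_level_lt (x := u) (by omega)) .white) p (by omega)
  have r := r.addWhite (v := b₁) (by grind [update_apply])
    (by have := count_update_le (update σ u .white) b₀ .black; omega)
  have r := r.slide isChild_irrefl (v := c₀) (c := b₀)
    (fun d hd => by rcases hc.eq_or_eq d hd with rfl | rfl <;> grind [update_apply])
    hc.isChild₀ (by grind [update_apply])
  rw [show update (update (update (update (update σ u .white) b₀ .black) b₁ .white) c₀ .black)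
      b₀ .none = update (update (update σ u .white) b₁ .white) c₀ .black by
    ext w; grind [update_apply]] at r
  have r := r.addWhite (v := c₁) (by grind [update_apply])
    (by have := count_update_le (update σ u .white) b₁ .white
        have := count_update_le (update (update σ u .white) b₁ .white) c₀ .black; omega)
  have r := r.removeWhite (v := u) (by grind [update_apply])
    (fun d hd => by rcases hu.eq_or_eq d hd with rfl | rfl <;> grind [update_apply])
  have r := r.removeBlack (v := c₀) (by grind [update_apply])
  refine Reach.trans ?_ (Reach.trans (hb₁ _ ((hσ.mono ((subtree_subset hc.isChild₁.mem_subtree).trans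
    hsub₀)).update (not_mem_subtree_of_level_lt (by omega)) _) p
    (by have := count_update_le σ c₁ .white; omega))
    (h₁ σ (hσ.mono (subtree_subset hu.isChild₁.mem_subtree)) p hp))
  convert r using 1
  ext w; grind [update_apply]

theorem blackPlaceable_and_whiteRemovable (m : ℕ) :
    ∀ u : TNode 2 h, (u.1 : ℕ) + m = h → 1 ≤ m →
      BlackPlaceable u (min m (m / 2 + 2)) ∧ WhiteRemovable u (m / 2 + 2) := by
  induction m using Nat.strong_induction_on with
  | _ m ih =>
  intro u hu hm
  rcases Nat.lt_or_ge m 2 with hm1 | hm2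
  · exact ⟨(blackPlaceable_leaf (by omega)).mono (by omega),
      (whiteRemovable_leaf (by omega)).mono (by omega)⟩
  have hu' : (u.1 : ℕ) + 1 < h := by omega
  have hch := children_childAt u hu'
  have hchild : ∀ {c : TNode 2 h}, IsChild 2 h c u →
      BlackPlaceable c (min (m - 1) ((m - 1) / 2 + 2)) ∧ WhiteRemovable c ((m - 1) / 2 + 2) :=
    fun hc => ih (m - 1) (by omega) _ (by rw [hc.level_eq]; omega) (by omega)
  obtain ⟨hb₀, -⟩ := hchild hch.isChild₀
  obtain ⟨hb₁, hw₁⟩ := hchild hch.isChild₁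
  rcases Nat.lt_or_ge m 3 with hm3 | hm3
  · exact ⟨(blackPlaceable_of_children hch hb₀ hb₁).mono (by omega),
      (whiteRemovable_of_children hch (k := 2) le_rfl (hb₀.mono (by omega))
        (hw₁.mono (by omega))).mono (by omega)⟩
  have hch₀ := children_childAt _ (show ((childAt u 0 hu').1 : ℕ) + 1 < h by
    rw [hch.isChild₀.level_eq]; omega)
  have hch₁ := children_childAt _ (show ((childAt u 1 hu').1 : ℕ) + 1 < h by
    rw [hch.isChild₁.level_eq]; omega)
  have hgrand : ∀ {c a : TNode 2 h}, IsChild 2 h a c → IsChild 2 h c u →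
      BlackPlaceable a (min (m - 2) ((m - 2) / 2 + 2)) ∧ WhiteRemovable a ((m - 2) / 2 + 2) :=
    fun ha hc => ih (m - 2) (by omega) _ (by rw [ha.level_eq, hc.level_eq]; omega) (by omega)
  obtain ⟨hb₀₀, -⟩ := hgrand hch₀.isChild₀ hch.isChild₀
  obtain ⟨-, hw₀₁⟩ := hgrand hch₀.isChild₁ hch.isChild₀
  obtain ⟨hb₁₀, -⟩ := hgrand hch₁.isChild₀ hch.isChild₁
  obtain ⟨-, hw₁₁⟩ := hgrand hch₁.isChild₁ hch.isChild₁
  refine ⟨(blackPlaceable_of_grandchildren hch hch₁ (k := min m (m / 2 + 2) - 1) (by omega)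
    (hb₀.mono (by omega)) (hb₁₀.mono (by omega)) (hw₁₁.mono (by omega))).mono (by omega), ?_⟩
  rcases Nat.lt_or_ge m 4 with hm4 | hm4
  · exact (whiteRemovable_of_children hch (k := 2) le_rfl (hb₀.mono (by omega))
      (hw₁.mono (by omega))).mono (by omega)
  · exact (whiteRemovable_of_grandchildren hch hch₀ (k := m / 2 + 1) (by omega)
      (hb₀₀.mono (by omega)) (hw₀₁.mono (by omega)) (hw₁.mono (by omega))).mono (by omega)

lemma bwPebbles_of_children {hh : 0 < h} {c₀ c₁ : TNode 2 h} (hr : Children (troot 2 h hh) c₀ c₁)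
    {k : ℕ} (hk : 2 ≤ k) (h₀ : BlackPlaceable c₀ k) (h₁ : WhiteRemovable c₁ k) :
    BWPebbles 2 h hh k := by
  set r := troot 2 h hh
  have hvac : Vacant (fun _ : TNode 2 h => Pebble.none) univ := fun _ _ => rfl
  have hcount : count (fun _ : TNode 2 h => Pebble.none) = 0 := by simp [count]
  have hne := hr.ne
  have l₀ := hr.isChild₀.level_eq
  have l₁ := hr.isChild₁.level_eq
  have r₁ := h₀ _ (hvac.mono (subset_univ _)) k (by omega)
  have r₁ := r₁.addWhite (v := c₁) (by grind [update_apply])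
    (by have := count_update_le (fun _ : TNode 2 h => Pebble.none) c₀ .black; omega)
  have r₁ := r₁.slide isChild_irrefl (v := r) (c := c₀)
    (fun d hd => by rcases hr.eq_or_eq d hd with rfl | rfl <;> grind [update_apply])
    hr.isChild₀ (by grind [update_apply])
  have r₂ := (Reach.refl (child := IsChild 2 h) r₁.count_le).removeBlack (v := r)
    (by grind [update_apply])
  refine Pebble.pebblingLE_of_reach isChild_irrefl (v := r) (by grind [update_apply]) r₁
    (Reach.trans ?_ (h₁ _ (hvac.mono (subset_univ _)) k (by omega)))
  convert r₂ using 1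
  ext w; grind [update_apply]

theorem bwPebbles_binary_le {h : ℕ} (hh : 0 < h) (h2 : 2 ≤ h) :
    BWPebbles 2 h hh (((h + 1) / 2 + 1 : ℕ) : ℝ) := by
  have hc := children_childAt (troot 2 h hh) (by simp [troot]; omega)
  have hm : ∀ {c}, IsChild 2 h c (troot 2 h hh) → (c.1 : ℕ) + (h - 1) = h := fun hc' => by
    rw [hc'.level_eq]; simp [troot]; omega
  obtain ⟨hb, -⟩ := blackPlaceable_and_whiteRemovable (h - 1) _ (hm hc.isChild₀) (by omega)
  obtain ⟨-, hw⟩ := blackPlaceable_and_whiteRemovable (h - 1) _ (hm hc.isChild₁) (by omega)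
  exact bwPebbles_of_children hc (by omega) (hb.mono (by omega)) (hw.mono (by omega))

end UpperBound

section LowerBound

variable {V : Type}

lemma exists_last_of_le {P : ℕ → Prop} {s τ : ℕ} (hs : P s) (hsτ : s ≤ τ) :
    ∃ r, s ≤ r ∧ r ≤ τ ∧ P r ∧ ∀ r', r < r' → r' ≤ τ → ¬ P r' := by
  classical
  let Q r := s ≤ r ∧ P r
  have hQ : Q s := ⟨le_rfl, hs⟩
  refine ⟨Nat.findGreatest Q τ, Nat.le_findGreatest hsτ hQ, Nat.findGreatest_le τ,
    (Nat.findGreatest_spec hsτ hQ).2, fun r' hr' hr'τ hP => ?_⟩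
  exact Nat.findGreatest_is_greatest hr' hr'τ
    ⟨(Nat.le_findGreatest hsτ hQ).trans hr'.le, hP⟩

lemma exists_first_of_le {P : ℕ → Prop} {τ t : ℕ} (ht : P t) (hτt : τ ≤ t) :
    ∃ r, τ ≤ r ∧ r ≤ t ∧ P r ∧ ∀ r', τ ≤ r' → r' < r → ¬ P r' := by
  classical
  have hex : ∃ e, P (τ + e) := ⟨t - τ, by rwa [Nat.add_sub_cancel' hτt]⟩
  refine ⟨τ + Nat.find hex, by omega,
    by have := Nat.find_min' hex (m := t - τ) (by rwa [Nat.add_sub_cancel' hτt]); omega,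
    Nat.find_spec hex, fun r' hr' hr'r hP => ?_⟩
  exact Nat.find_min hex (m := r' - τ) (by omega) (by rwa [Nat.add_sub_cancel' hr'])

namespace FConfig

def Pebbled (A : FConfig V) (v : V) : Prop := A.b v ≠ 0 ∨ A.w v ≠ 0

lemma pebbled_of_add_eq_one {A : FConfig V} {v : V} (hv : A.b v + A.w v = 1) : A.Pebbled v := by
  by_contra hn
  simp only [Pebbled, not_or, not_not] at hn
  rw [hn.1, hn.2] at hv
  norm_num at hv

open Classical in
noncomputable def pebbledCount (A : FConfig V) (S : Finset V) : ℕ := #{u ∈ S | A.Pebbled u}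

lemma pebbledCount_mono (A : FConfig V) {S T : Finset V} (hST : S ⊆ T) :
    A.pebbledCount S ≤ A.pebbledCount T := by
  classical
  exact card_le_card (filter_subset_filter _ hST)

lemma exists_pebbled_of_pebbledCount_pos {A : FConfig V} {S : Finset V}
    (hS : 0 < A.pebbledCount S) : ∃ u ∈ S, A.Pebbled u := by
  classical
  obtain ⟨u, hu⟩ := card_pos.1 hS
  exact ⟨u, (mem_filter.1 hu).1, (mem_filter.1 hu).2⟩

lemma two_le_pebbledCount {A : FConfig V} {S : Finset V} {x y : V} (hx : x ∈ S) (hy : y ∈ S)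
    (hxy : x ≠ y) (hpx : A.Pebbled x) (hpy : A.Pebbled y) : 2 ≤ A.pebbledCount S := by
  classical
  rw [← card_pair hxy]
  refine card_le_card fun u hu => ?_
  rcases mem_insert.1 hu with rfl | hu
  · exact mem_filter.2 ⟨hx, hpx⟩
  · rw [mem_singleton.1 hu]; exact mem_filter.2 ⟨hy, hpy⟩

lemma not_pebbled_of_pebbledCount_le {A : FConfig V} {S T : Finset V} {K : ℕ} (hTS : T ⊆ S)
    (hS : A.pebbledCount S ≤ K) (hT : K ≤ A.pebbledCount T) {u : V} (hu : u ∈ S) (huT : u ∉ T) :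
    ¬ A.Pebbled u := by
  classical
  intro hpu
  have : insert u {w ∈ T | A.Pebbled w} ⊆ {w ∈ S | A.Pebbled w} := by
    intro w hw
    rcases mem_insert.1 hw with rfl | hw
    · exact mem_filter.2 ⟨hu, hpu⟩
    · exact mem_filter.2 ⟨hTS (mem_filter.1 hw).1, (mem_filter.1 hw).2⟩
  have := card_le_card this
  rw [card_insert_of_notMem fun h' => huT (mem_filter.1 h').1] at this
  unfold pebbledCount at hS hT
  omega

lemma pebbledCount_le_weight [Fintype V] {A : FConfig V} (hA : A.Whole) (S : Finset V) :
    (A.pebbledCount S : ℝ) ≤ A.weight := by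
  classical
  have hnn : ∀ u, 0 ≤ A.b u + A.w u := fun u => by
    rcases hA u with ⟨hb | hb, hw | hw⟩ <;> simp [hb, hw]
  calc (A.pebbledCount S : ℝ) = ∑ _u ∈ {u ∈ S | A.Pebbled u}, (1 : ℝ) := by simp [pebbledCount]
    _ ≤ ∑ u ∈ {u ∈ S | A.Pebbled u}, (A.b u + A.w u) := sum_le_sum fun u hu => by
        have hpu := (mem_filter.1 hu).2
        rcases hA u with ⟨hb | hb, hw | hw⟩ <;> simp_all [Pebbled]
    _ ≤ A.weight := sum_le_sum_of_subset_of_nonneg (subset_univ _) fun u _ _ => hnn u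

end FConfig

lemma FMove.children_full {child : V → V → Prop} {A B : FConfig V} (hm : FMove child A B)
    {v : V} (hv : A.b v < B.b v ∨ B.w v < A.w v) : ∀ c, child c v → A.b c + A.w c = 1 := by
  rcases hm with ⟨u, hb, hw, hoth⟩ | ⟨u, hb, hw, hoth⟩ | ⟨u, hfull, -, -, hch, hoth⟩
  · by_cases hvu : v = u <;> grind
  · by_cases hvu : v = u <;> grind
  · by_cases hvu : v = u
    · subst hvu; exact hfull
    · by_cases hvc : child v u <;> grind

lemma exists_window (C : ℕ → FConfig V) (D : Finset V) {S τ T : ℕ} (hSτ : S ≤ τ) (hτT : τ ≤ T)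
    (hB : ∀ u ∈ D, (C S).b u = 0) (hW : ∀ u ∈ D, (C T).w u = 0) :
    ∃ s t, S ≤ s ∧ s ≤ τ ∧ τ ≤ t ∧ t ≤ T ∧ (∀ u ∈ D, (C s).b u = 0) ∧ (∀ u ∈ D, (C t).w u = 0) ∧
      (∀ r, s < r → r ≤ τ → ∃ u ∈ D, (C r).Pebbled u) ∧
      (∀ r, τ ≤ r → r < t → ∃ u ∈ D, (C r).Pebbled u) := by
  obtain ⟨s, hSs, hsτ, hs, hs'⟩ := exists_last_of_le (P := fun r => ∀ u ∈ D, (C r).b u = 0) hB hSτ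
  obtain ⟨t, hτt, htT, ht, ht'⟩ := exists_first_of_le (P := fun r => ∀ u ∈ D, (C r).w u = 0) hW hτT
  refine ⟨s, t, hSs, hsτ, hτt, htT, hs, ht, fun r hr hr' => ?_, fun r hr hr' => ?_⟩
  · obtain ⟨u, hu, hb⟩ := not_forall₂.1 (hs' r hr hr')
    exact ⟨u, hu, Or.inl hb⟩
  · obtain ⟨u, hu, hw⟩ := not_forall₂.1 (ht' r hr hr')
    exact ⟨u, hu, Or.inr hw⟩

structure WholeRun (child : V → V → Prop) (C : ℕ → FConfig V) (n : ℕ) : Prop where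
  whole : ∀ t ≤ n, (C t).Whole
  move : ∀ t < n, FMove child (C t) (C (t + 1))

namespace WholeRun

variable {child : V → V → Prop} {C : ℕ → FConfig V} {n : ℕ}

lemma exists_black_birth (hC : WholeRun child C n) {c : V} {s τ : ℕ} (hsτ : s ≤ τ) (hτn : τ ≤ n)
    (h0 : (C s).b c = 0) (h1 : (C τ).b c ≠ 0) :
    ∃ τc, s ≤ τc ∧ τc < τ ∧ (∀ d, child d c → (C τc).b d + (C τc).w d = 1) ∧
      ∀ r, τc < r → r ≤ τ → (C r).b c ≠ 0 := by
  obtain ⟨τc, hs, hτ, hP, hnP⟩ := exists_last_of_le (P := fun r => (C r).b c = 0) h0 hsτ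
  have hlt : τc < τ := lt_of_le_of_ne hτ fun e => h1 (e ▸ hP)
  refine ⟨τc, hs, hlt, (hC.move τc (by omega)).children_full (Or.inl ?_), hnP⟩
  rcases (hC.whole (τc + 1) (by omega) c).1 with h | h
  · exact absurd h (hnP (τc + 1) (by omega) (by omega))
  · rw [hP, h]; norm_num

lemma exists_white_death (hC : WholeRun child C n) {c : V} {τ t : ℕ} (hτt : τ ≤ t) (htn : t ≤ n)
    (h1 : (C τ).w c ≠ 0) (h0 : (C t).w c = 0) :
    ∃ τc, τ ≤ τc ∧ τc < t ∧ (∀ d, child d c → (C τc).b d + (C τc).w d = 1) ∧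
      ∀ r, τ ≤ r → r ≤ τc → (C r).w c ≠ 0 := by
  obtain ⟨r₀, hτ, ht, hP, hnP⟩ := exists_first_of_le (P := fun r => (C r).w c = 0) h0 hτt
  have hlt : τ < r₀ := lt_of_le_of_ne hτ fun e => h1 (e ▸ hP)
  refine ⟨r₀ - 1, by omega, by omega,
    (hC.move (r₀ - 1) (by omega)).children_full (Or.inr ?_), fun r hr hr' => hnP r hr (by omega)⟩
  rcases (hC.whole (r₀ - 1) (by omega) c).2 with h | h
  · exact absurd h (hnP (r₀ - 1) (by omega) (by omega))
  · rw [Nat.sub_add_cancel (by omega), hP, h]; norm_num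

lemma exists_critical_time (hC : WholeRun child C n) {c : V} {S τ T : ℕ} (hSτ : S ≤ τ)
    (hτT : τ ≤ T) (hTn : T ≤ n) (hpeb : (C τ).Pebbled c) (hB : (C S).b c = 0)
    (hW : (C T).w c = 0) :
    ∃ τc, S ≤ τc ∧ τc < T ∧ (∀ d, child d c → (C τc).Pebbled d) ∧
      (∀ r, τc < r → r ≤ τ → (C r).Pebbled c) ∧ (∀ r, τ ≤ r → r ≤ τc → (C r).Pebbled c) := by
  rcases hpeb with hb | hw
  · obtain ⟨τc, h₁, h₂, h₃, h₄⟩ := hC.exists_black_birth hSτ (hτT.trans hTn) hB hb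
    exact ⟨τc, h₁, by omega, fun d hd => FConfig.pebbled_of_add_eq_one (h₃ d hd),
      fun r hr hr' => Or.inl (h₄ r hr hr'), fun r hr hr' => by omega⟩
  · obtain ⟨τc, h₁, h₂, h₃, h₄⟩ := hC.exists_white_death hτT hTn hw hW
    exact ⟨τc, by omega, h₂, fun d hd => FConfig.pebbled_of_add_eq_one (h₃ d hd),
      fun r hr hr' => by omega, fun r hr hr' => Or.inr (h₄ r hr hr')⟩

end WholeRun

end LowerBound

section BinaryLowerBound

open FConfig TNode

variable {h : ℕ} {C : ℕ → FConfig (TNode 2 h)} {n : ℕ}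

def SubtreeLowerBound (C : ℕ → FConfig (TNode 2 h)) (n m : ℕ) : Prop :=
  ∀ v : TNode 2 h, (v.1 : ℕ) + m = h → ∀ s τ t, s ≤ τ → τ ≤ t → t ≤ n →
    (∀ c, IsChild 2 h c v → (C τ).Pebbled c) → (∀ u ∈ below v, (C s).b u = 0) →
    (∀ u ∈ below v, (C t).w u = 0) →
    ∃ ρ, s ≤ ρ ∧ ρ ≤ t ∧ (m + 1) / 2 + 1 ≤ (C ρ).pebbledCount (below v)

/-- How a node `c` pebbled at time `τ` is used. At time `crit` the pebble it has at time `τ` is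
placed or removed, so its children are pebbled then; `lo` is the last time before `crit` with
no black pebble below `c`, `hi` the first time after it with no white one; at time `heavy` of
this window there are many pebbles below `c`. -/
structure Engagement (C : ℕ → FConfig (TNode 2 h)) (c : TNode 2 h) (τ : ℕ) where
  crit : ℕ
  lo : ℕ
  hi : ℕ
  heavy : ℕ
  lo_le_crit : lo ≤ crit
  crit_le_hi : crit ≤ hi
  lo_le_heavy : lo ≤ heavy
  heavy_le_hi : heavy ≤ hi
  children_pebbled : ∀ d, IsChild 2 h d c → (C crit).Pebbled d
  noBlack : ∀ u ∈ below c, (C lo).b u = 0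
  noWhite : ∀ u ∈ below c, (C hi).w u = 0
  pebbled_of_crit_lt : ∀ r, crit < r → r ≤ τ → (C r).Pebbled c
  pebbled_of_le_crit : ∀ r, τ ≤ r → r ≤ crit → (C r).Pebbled c
  busy_black : ∀ r, lo < r → r ≤ crit → ∃ u ∈ below c, (C r).Pebbled u
  busy_white : ∀ r, crit ≤ r → r < hi → ∃ u ∈ below c, (C r).Pebbled u
  heavy_count : (h - c.1 + 1) / 2 + 1 ≤ (C heavy).pebbledCount (below c)
  heavy_eq_crit : h - (c.1 : ℕ) = 2 → heavy = crit

lemma exists_engagement (hC : WholeRun (IsChild 2 h) C n) {c : TNode 2 h} {j : ℕ}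
    (hj : (c.1 : ℕ) + j = h) (hj2 : 2 ≤ j) (ih : 3 ≤ j → SubtreeLowerBound C n j) {S τ T : ℕ}
    (hSτ : S ≤ τ) (hτT : τ ≤ T) (hTn : T ≤ n) (hpeb : (C τ).Pebbled c)
    (hB : ∀ u ∈ subtree c, (C S).b u = 0) (hW : ∀ u ∈ subtree c, (C T).w u = 0) :
    ∃ e : Engagement C c τ, S ≤ e.lo ∧ e.hi ≤ T := by
  obtain ⟨τc, hSτc, hτcT, hfull, hlt, hgt⟩ := hC.exists_critical_time hSτ hτT hTn hpeb
    (hB c (mem_subtree_self c)) (hW c (mem_subtree_self c))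
  obtain ⟨s, t, hSs, hsτc, hτct, htT, hs, ht, hbb, hbw⟩ := exists_window C (below c) hSτc hτcT.le
    (fun u hu => hB u (below_subset_subtree c hu)) (fun u hu => hW u (below_subset_subtree c hu))
  have hheavy : ∃ ρ, s ≤ ρ ∧ ρ ≤ t ∧ (h - c.1 + 1) / 2 + 1 ≤ (C ρ).pebbledCount (below c) ∧
      (h - (c.1 : ℕ) = 2 → ρ = τc) := by
    rcases Nat.lt_or_ge j 3 with hj3 | hj3
    · have hc := children_childAt c (by omega)
      have := two_le_pebbledCount hc.isChild₀.mem_below hc.isChild₁.mem_below hc.ne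
        (hfull _ hc.isChild₀) (hfull _ hc.isChild₁)
      exact ⟨τc, hsτc, hτct, by omega, fun _ => rfl⟩
    · obtain ⟨ρ, h₁, h₂, h₃⟩ := ih hj3 c hj s τc t hsτc hτct (htT.trans hTn) hfull hs ht
      exact ⟨ρ, h₁, h₂, by omega, fun _ => by omega⟩
  obtain ⟨ρ, hρ₁, hρ₂, hρ₃, hρ₄⟩ := hheavy
  exact ⟨⟨τc, s, t, ρ, hsτc, hτct, hρ₁, hρ₂, hfull, hs, ht, hlt, hgt, hbb, hbw, hρ₃, hρ₄⟩, hSs, htT⟩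

namespace Engagement

variable {c : TNode 2 h} {τ : ℕ}

lemma exists_pebbled_heavy (e : Engagement C c τ) : ∃ u ∈ below c, (C e.heavy).Pebbled u :=
  exists_pebbled_of_pebbledCount_pos (by have := e.heavy_count; omega)

lemma escape (e : Engagement C c τ) {r : ℕ} (hr : ∀ u ∈ subtree c, ¬ (C r).Pebbled u) :
    (r ≤ e.lo ∧ r < τ) ∨ (e.hi ≤ r ∧ τ < r) := by
  have h₁ : ¬ (e.crit < r ∧ r ≤ τ) := fun ⟨h₁, h₂⟩ =>
    hr c (mem_subtree_self c) (e.pebbled_of_crit_lt r h₁ h₂)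
  have h₂ : ¬ (τ ≤ r ∧ r ≤ e.crit) := fun ⟨h₁, h₂⟩ =>
    hr c (mem_subtree_self c) (e.pebbled_of_le_crit r h₁ h₂)
  have h₃ : ¬ (e.lo < r ∧ r ≤ e.crit) := fun ⟨h₁, h₂⟩ => by
    obtain ⟨u, hu, hp⟩ := e.busy_black r h₁ h₂
    exact hr u (below_subset_subtree c hu) hp
  have h₄ : ¬ (e.crit ≤ r ∧ r < e.hi) := fun ⟨h₁, h₂⟩ => by
    obtain ⟨u, hu, hp⟩ := e.busy_white r h₁ h₂
    exact hr u (below_subset_subtree c hu) hp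
  have := e.lo_le_crit
  have := e.crit_le_hi
  omega

/-- By `escape` each heavy time lies before or after the other engagement; both before, or both
after, would force the two heavy times to coincide. -/
lemma late_of_disjoint {x y : TNode 2 h} (ex : Engagement C x τ) (ey : Engagement C y τ)
    (hx : ∀ u ∈ subtree y, ¬ (C ex.heavy).Pebbled u)
    (hy : ∀ u ∈ subtree x, ¬ (C ey.heavy).Pebbled u) (hne : ex.heavy ≠ ey.heavy) :
    (τ < ey.heavy ∧ ex.hi ≤ ey.heavy) ∨ (τ < ex.heavy ∧ ey.hi ≤ ex.heavy) := by
  have := ey.escape hx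
  have := ex.escape hy
  have := ex.lo_le_heavy
  have := ex.heavy_le_hi
  have := ey.lo_le_heavy
  have := ey.heavy_le_hi
  omega

lemma not_pebbled_heavy {g v : TNode 2 h} (e : Engagement C g τ) {s t K : ℕ} (hs : s ≤ e.lo)
    (ht : e.hi ≤ t) (hgv : below g ⊆ below v)
    (hsmall : ∀ ρ, s ≤ ρ → ρ ≤ t → (C ρ).pebbledCount (below v) ≤ K)
    (hK : K ≤ (h - g.1 + 1) / 2 + 1) {u : TNode 2 h} (hu : u ∈ below v) (hug : u ∉ below g) :
    ¬ (C e.heavy).Pebbled u :=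
  not_pebbled_of_pebbledCount_le hgv
    (hsmall _ (hs.trans e.lo_le_heavy) (e.heavy_le_hi.trans ht)) (hK.trans e.heavy_count) hu hug

lemma late_of_children {w v c₀ c₁ : TNode 2 h} (hw : Children w c₀ c₁) (hwv : below w ⊆ below v)
    {s t K : ℕ} (hsmall : ∀ ρ, s ≤ ρ → ρ ≤ t → (C ρ).pebbledCount (below v) ≤ K)
    (hK : K ≤ (h - c₀.1 + 1) / 2 + 1) (e₀ : Engagement C c₀ τ) (hs₀ : s ≤ e₀.lo)
    (ht₀ : e₀.hi ≤ t) (e₁ : Engagement C c₁ τ) (hs₁ : s ≤ e₁.lo) (ht₁ : e₁.hi ≤ t) :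
    (τ < e₁.heavy ∧ e₀.hi ≤ e₁.heavy) ∨ (τ < e₀.heavy ∧ e₁.hi ≤ e₀.heavy) := by
  have hK₁ : K ≤ (h - c₁.1 + 1) / 2 + 1 := by
    rw [hw.isChild₁.level_eq, ← hw.isChild₀.level_eq]; exact hK
  have solo₀ : ∀ u ∈ subtree c₁, ¬ (C e₀.heavy).Pebbled u := fun u hu =>
    e₀.not_pebbled_heavy hs₀ ht₀ (hw.isChild₀.below_subset_below.trans hwv) hsmall hK
      (hwv (hw.isChild₁.subtree_subset_below hu))
      (fun hu' => hw.not_mem_subtree_of_mem_subtree (below_subset_subtree _ hu') hu)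
  have solo₁ : ∀ u ∈ subtree c₀, ¬ (C e₁.heavy).Pebbled u := fun u hu =>
    e₁.not_pebbled_heavy hs₁ ht₁ (hw.isChild₁.below_subset_below.trans hwv) hsmall hK₁
      (hwv (hw.isChild₀.subtree_subset_below hu))
      (fun hu' => hw.symm.not_mem_subtree_of_mem_subtree (below_subset_subtree _ hu') hu)
  refine e₀.late_of_disjoint e₁ solo₀ solo₁ fun heq => ?_
  obtain ⟨u, hu, hp⟩ := e₁.exists_pebbled_heavy
  exact solo₀ u (below_subset_subtree _ hu) (heq ▸ hp)

end Engagement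

/-- At the heavy time of `g` everything else below `v` is empty: `x`, so that time comes after `τ`,
and the subtree of `y`, so it comes after the engagement of `y` and equals the heavy time of `y`. -/
lemma false_of_late_grandchild {v x y g : TNode 2 h} (hv : Children v x y) (hgx : IsChild 2 h g x)
    {s τ t K : ℕ} (hsmall : ∀ ρ, s ≤ ρ → ρ ≤ t → (C ρ).pebbledCount (below v) ≤ K)
    (hK : K ≤ (h - g.1 + 1) / 2 + 1) (ex : Engagement C x τ) (hxt : ex.hi ≤ t)
    (ey : Engagement C y τ) (hxy : ex.hi ≤ ey.heavy) (eg : Engagement C g ex.crit)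
    (hsg : s ≤ eg.lo) (hgx' : eg.hi ≤ ex.hi) (hlt : ex.crit < eg.heavy) : False := by
  have hgsub : ∀ {u}, u ∈ below g → u ∈ subtree x := fun hu =>
    below_subset_subtree x (hgx.below_subset_below hu)
  have solo : ∀ u ∈ below v, u ∉ below g → ¬ (C eg.heavy).Pebbled u :=
    fun u hu hug => eg.not_pebbled_heavy hsg (hgx'.trans hxt)
      (hgx.below_subset_below.trans hv.isChild₀.below_subset_below) hsmall hK hu hug
  have hτ : τ < eg.heavy := by
    by_contra hle
    refine solo x hv.isChild₀.mem_below (fun hx => ?_)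
      (ex.pebbled_of_crit_lt _ hlt (not_lt.1 hle))
    have := level_le_of_mem_subtree (below_subset_subtree g hx)
    have := hgx.level_eq
    omega
  have := ey.escape fun u hu => solo u (hv.isChild₁.subtree_subset_below hu)
    fun hug => hv.not_mem_subtree_of_mem_subtree (hgsub hug) hu
  have heq : eg.heavy = ey.heavy := by
    have := eg.heavy_le_hi
    have := ey.heavy_le_hi
    omega
  obtain ⟨u, hu, hp⟩ := ey.exists_pebbled_heavy
  exact solo u (hv.isChild₁.below_subset_below hu)
    (fun hug => hv.not_mem_subtree_of_mem_subtree (hgsub hug) (below_subset_subtree y hu))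
    (heq ▸ hp)

/-- For `m = 3`, `y` is itself pebbled at its heavy time; for larger `m`, one of the grandchildren
below `x` is heavy after the critical time of `x`. -/
lemma false_of_late_sibling (hC : WholeRun (IsChild 2 h) C n) {m : ℕ} (hm : 3 ≤ m)
    (hodd : m % 2 = 1) (ih : 3 ≤ m - 2 → SubtreeLowerBound C n (m - 2)) {v x y : TNode 2 h}
    (hv : Children v x y) (hvm : (v.1 : ℕ) + m = h) {s τ t : ℕ} (htn : t ≤ n)
    (hsmall : ∀ ρ, s ≤ ρ → ρ ≤ t → (C ρ).pebbledCount (below v) ≤ (m - 1) / 2 + 1)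
    (ex : Engagement C x τ) (hsx : s ≤ ex.lo) (htx : ex.hi ≤ t)
    (ey : Engagement C y τ) (hsy : s ≤ ey.lo) (hty : ey.hi ≤ t)
    (hlate : τ < ey.heavy ∧ ex.hi ≤ ey.heavy) : False := by
  have hlx := hv.isChild₀.level_eq
  have hly := hv.isChild₁.level_eq
  rcases Nat.lt_or_ge m 5 with hm5 | hm5
  · exact ey.not_pebbled_heavy hsy hty hv.isChild₁.below_subset_below hsmall (by omega)
      hv.isChild₁.mem_below (fun hy => (mem_erase.1 hy).1 rfl)
      (ey.pebbled_of_le_crit _ hlate.1.le (ey.heavy_eq_crit (by omega)).le)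
  have hg := children_childAt x (by omega)
  have engage : ∀ {g}, IsChild 2 h g x →
      ∃ e : Engagement C g ex.crit, ex.lo ≤ e.lo ∧ e.hi ≤ ex.hi := fun hgx =>
    exists_engagement hC (j := m - 2) (by rw [hgx.level_eq]; omega) (by omega) ih
      ex.lo_le_crit ex.crit_le_hi (htx.trans htn) (ex.children_pebbled _ hgx)
      (fun u hu => ex.noBlack u (hgx.subtree_subset_below hu))
      (fun u hu => ex.noWhite u (hgx.subtree_subset_below hu))
  obtain ⟨e₀, hs₀, ht₀⟩ := engage hg.isChild₀
  obtain ⟨e₁, hs₁, ht₁⟩ := engage hg.isChild₁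
  rcases Engagement.late_of_children hg hv.isChild₀.below_subset_below
      (fun ρ h₁ h₂ => hsmall ρ (hsx.trans h₁) (h₂.trans htx))
      (by rw [hg.isChild₀.level_eq]; omega) e₀ hs₀ ht₀ e₁ hs₁ ht₁ with ⟨hl, -⟩ | ⟨hl, -⟩
  · exact false_of_late_grandchild hv hg.isChild₁ hsmall (by rw [hg.isChild₁.level_eq]; omega)
      ex htx ey hlate.2 e₁ (hsx.trans hs₁) ht₁ hl
  · exact false_of_late_grandchild hv hg.isChild₀ hsmall (by rw [hg.isChild₀.level_eq]; omega)
      ex htx ey hlate.2 e₀ (hsx.trans hs₀) ht₀ hl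

theorem subtreeLowerBound (hC : WholeRun (IsChild 2 h) C n) (m : ℕ) (hm : 2 ≤ m) :
    SubtreeLowerBound C n m := by
  induction m using Nat.strong_induction_on with
  | _ m ih =>
  intro v hv s τ t hsτ hτt htn hch hB hW
  have hc := children_childAt v (by omega)
  rcases Nat.lt_or_ge m 3 with hm3 | hm3
  · have := two_le_pebbledCount hc.isChild₀.mem_below hc.isChild₁.mem_below hc.ne
      (hch _ hc.isChild₀) (hch _ hc.isChild₁)
    exact ⟨τ, hsτ, hτt, by omega⟩
  have engage : ∀ {x}, IsChild 2 h x v → ∃ e : Engagement C x τ, s ≤ e.lo ∧ e.hi ≤ t :=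
    fun hx => exists_engagement hC (j := m - 1) (by rw [hx.level_eq]; omega) (by omega)
      (fun _ => ih (m - 1) (by omega) (by omega)) hsτ hτt htn (hch _ hx)
      (fun u hu => hB u (hx.subtree_subset_below hu)) (fun u hu => hW u (hx.subtree_subset_below hu))
  have hlx := hc.isChild₀.level_eq
  obtain ⟨ex, hsx, htx⟩ := engage hc.isChild₀
  rcases Nat.even_or_odd m with heven | hodd
  · -- for even `m` the bound below a child is already the bound below `v`
    have := ex.heavy_count
    have := pebbledCount_mono (C ex.heavy) hc.isChild₀.below_subset_below
    have := Nat.even_iff.1 heven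
    exact ⟨ex.heavy, hsx.trans ex.lo_le_heavy, ex.heavy_le_hi.trans htx, by omega⟩
  by_contra! hcon
  have hsmall : ∀ ρ, s ≤ ρ → ρ ≤ t → (C ρ).pebbledCount (below v) ≤ (m - 1) / 2 + 1 :=
    fun ρ h₁ h₂ => by have := hcon ρ h₁ h₂; have := Nat.odd_iff.1 hodd; omega
  have hodd' := Nat.odd_iff.1 hodd
  have ih' : 3 ≤ m - 2 → SubtreeLowerBound C n (m - 2) := fun _ => ih (m - 2) (by omega) (by omega)
  obtain ⟨ey, hsy, hty⟩ := engage hc.isChild₁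
  rcases Engagement.late_of_children hc subset_rfl hsmall (by omega) ex hsx htx ey hsy hty
    with hl | hl
  · exact false_of_late_sibling hC hm3 hodd' ih' hc hv htn hsmall ex hsx htx ey hsy hty hl
  · exact false_of_late_sibling hC hm3 hodd' ih' hc.symm hv htn hsmall ey hsy hty ex hsx htx hl

theorem bwPebbles_binary_ge {h : ℕ} (hh : 0 < h) (h2 : 2 ≤ h) {p : ℝ} (hp : BWPebbles 2 h hh p) :
    (((h + 1) / 2 + 1 : ℕ) : ℝ) ≤ p := by
  obtain ⟨n, C, hC0, hCn, -, hwhole, hmove, ⟨t₀, ht₀, hroot⟩, hweight⟩ := hp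
  have hC : WholeRun (IsChild 2 h) C n := ⟨hwhole, hmove⟩
  obtain ⟨τ, -, hτ, hfull, -⟩ := hC.exists_black_birth (Nat.zero_le t₀) ht₀
    (by rw [hC0]; rfl) (by rw [hroot]; norm_num)
  obtain ⟨ρ, -, hρ, hcount⟩ := subtreeLowerBound hC h h2 (troot 2 h hh) (by simp [troot])
    0 τ n (Nat.zero_le τ) (by omega) le_rfl (fun c hc => pebbled_of_add_eq_one (hfull c hc))
    (fun u _ => by rw [hC0]; rfl) (fun u _ => by rw [hCn]; rfl)
  calc (((h + 1) / 2 + 1 : ℕ) : ℝ) ≤ (C ρ).pebbledCount (below (troot 2 h hh)) := by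
        exact_mod_cast hcount
    _ ≤ (C ρ).weight := pebbledCount_le_weight (hwhole ρ hρ) _
    _ ≤ p := hweight ρ hρ

end BinaryLowerBound

/-- For the complete binary tree of height `h ≥ 2`, the minimum number of pebbles in a
whole black-white pebbling (without white sliding moves) is exactly `⌈h/2⌉ + 1`
(note `⌈h/2⌉ = (h+1)/2` in natural-number arithmetic). -/
theorem bwPebbles_binary_eq (h : ℕ) (hh : 2 ≤ h) :
    BWPebbles 2 h (by omega) (((h + 1) / 2 + 1 : ℕ) : ℝ) ∧
    ∀ p : ℝ, BWPebbles 2 h (by omega) p → (((h + 1) / 2 + 1 : ℕ) : ℝ) ≤ p :=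
  ⟨bwPebbles_binary_le _ hh, fun _ => bwPebbles_binary_ge _ hh⟩
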